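/- arXiv:1701.06733 — 2 statements merged into one kernel-verified Lean document; each statement's English description precedes it below -/
import Mathlib

section
/- For an m×n block p over X and 1 ≤ k ≤ m, 1 ≤ l ≤ n, the number of primitive m×n blocks q whose k×l torus-occurrence counts all agree with those of p satisfies log₂ |T(p,k,l)| ≤ −(mn/(kl)) Σ_{w ∈ X^{k×l}} (N(w|p)/(mn)) log₂ (N(w|p)/(mn)). -/
/-!
Put `P w = N(w|p) / (mn)`, a probability vector on `k × l` blocks. For any block `q`, the
product over the `mn` torus positions of `P` evaluated at the window of `q` there equals
`∏_w P w ^ N(w|q)`, which is the same number `ρ` for every `q` with the counts of `p`.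
Every torus cell lies in exactly `kl` windows, so Finner's inequality (Hölder's inequality
applied one coordinate at a time) bounds the sum over all `q` of the `kl`-th root of that
product by `∏ (∑_w P w) ^ (1/kl) = 1`. Hence `|T(p,k,l)| · ρ ^ (1/kl) ≤ 1`, and `log₂ ρ` is
`mn` times the negative entropy of `P`.
-/

open Finset Filter MeasureTheory

/-- Cyclic (torus) occurrence count of the `k × l` block `u` in the `m × n` block `p`:
the number of positions `(i,j)` at which `u` occurs in the flat torus of `p`. -/
def cycCount {X : Type*} [DecidableEq X] {m n k l : ℕ} (p : Fin m → Fin n → X)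
    (u : Fin k → Fin l → X) : ℕ :=
  ((Finset.univ : Finset (Fin m × Fin n)).filter (fun ij =>
    ∀ (a : Fin k) (b : Fin l),
      p ⟨((ij.1 : ℕ) + (a : ℕ)) % m, Nat.mod_lt _ (by have := ij.1.isLt; omega)⟩
        ⟨((ij.2 : ℕ) + (b : ℕ)) % n, Nat.mod_lt _ (by have := ij.2.isLt; omega)⟩ = u a b)).card

/-- Horizontal (column-wise) concatenation `s : t`. -/
def hcat {X : Type*} {k l1 l2 : ℕ} (s : Fin k → Fin l1 → X) (t : Fin k → Fin l2 → X) :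
    Fin k → Fin (l1 + l2) → X :=
  fun a b => if h : (b : ℕ) < l1 then s a ⟨b, h⟩ else t a ⟨(b : ℕ) - l1, by have := b.isLt; omega⟩

/-- Vertical (row-wise) concatenation `u / v`. -/
def vcat {X : Type*} {k1 k2 l : ℕ} (u : Fin k1 → Fin l → X) (v : Fin k2 → Fin l → X) :
    Fin (k1 + k2) → Fin l → X :=
  fun a b => if h : (a : ℕ) < k1 then u ⟨a, h⟩ b else v ⟨(a : ℕ) - k1, by have := a.isLt; omega⟩ b

/-- Cyclic shift of `p` by `ij`. -/
def cycShift {X : Type*} {m n : ℕ} (p : Fin m → Fin n → X) (ij : Fin m × Fin n) :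
    Fin m → Fin n → X :=
  fun a b => p (a + ij.1) (b + ij.2)

/-- The set `[p]` of distinct cyclic shifts of `p`. -/
def orbit {X : Type*} [DecidableEq X] {m n : ℕ} (p : Fin m → Fin n → X) :
    Finset (Fin m → Fin n → X) :=
  Finset.image (cycShift p) Finset.univ

/-- `p` is primitive if its `m * n` cyclic shifts are pairwise distinct. -/
def Primitive {X : Type*} [DecidableEq X] {m n : ℕ} (p : Fin m → Fin n → X) : Prop :=
  (orbit p).card = m * n

instance {X : Type*} [DecidableEq X] {m n : ℕ} (p : Fin m → Fin n → X) :
    Decidable (Primitive p) := inferInstanceAs (Decidable (_ = _))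

/-- The set `T(p,k,l)` of primitive `m × n` blocks whose `k × l` cyclic counts
all agree with those of `p`. -/
def TSet {X : Type*} [Fintype X] [DecidableEq X] (m n k l : ℕ) (p : Fin m → Fin n → X) :
    Finset (Fin m → Fin n → X) :=
  Finset.univ.filter (fun q =>
    Primitive q ∧ ∀ w : Fin k → Fin l → X, cycCount q w = cycCount p w)


open Function
open scoped ENNReal

section Finner

variable {δ : Type*} [DecidableEq δ] {X : δ → Type*} [∀ i, MeasurableSpace (X i)]
  {μ : ∀ i, Measure (X i)}

theorem DependsOn.lmarginal {f : (∀ i, X i) → ℝ≥0∞} {W : Set δ} (hf : DependsOn f W)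
    (s : Finset δ) : DependsOn (∫⋯∫⁻_s, f ∂μ) W := by
  intro x y hxy
  refine lintegral_congr fun z => hf fun i hi => ?_
  simp only [Function.updateFinset]
  split_ifs
  · rfl
  · exact hxy i hi

variable {J : Type*} [Fintype J] {W : J → Finset δ} {d : ℕ}

theorem lintegral_update_prod_rpow_le {G : J → (∀ i, X i) → ℝ≥0∞} (hG : ∀ j, Measurable (G j))
    (hdep : ∀ j, DependsOn (G j) (W j)) {i : δ} (hd : #{j | i ∈ W j} = d) (hd0 : d ≠ 0)
    (x : ∀ i, X i) :
    ∫⁻ t, ∏ j, G j (update x i t) ^ (d⁻¹ : ℝ) ∂μ i ≤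
      (∏ j with i ∈ W j, (∫⁻ t, G j (update x i t) ∂μ i) ^ (d⁻¹ : ℝ)) *
        ∏ j with i ∉ W j, G j x ^ (d⁻¹ : ℝ) := by
  have hconst : ∀ j, i ∉ W j → ∀ t, G j (update x i t) = G j x := fun j hij t =>
    hdep j fun i' hi' => update_of_ne (ne_of_mem_of_not_mem hi' hij) _ _
  calc ∫⁻ t, ∏ j, G j (update x i t) ^ (d⁻¹ : ℝ) ∂μ i
      = ∫⁻ t, (∏ j with i ∈ W j, G j (update x i t) ^ (d⁻¹ : ℝ)) *
          ∏ j with i ∉ W j, G j x ^ (d⁻¹ : ℝ) ∂μ i := by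
        refine lintegral_congr fun t => ?_
        rw [← prod_filter_mul_prod_filter_not univ (fun j => i ∈ W j)]
        congr 1
        exact prod_congr rfl fun j hj => by rw [hconst j (mem_filter.1 hj).2]
    _ = (∫⁻ t, ∏ j with i ∈ W j, G j (update x i t) ^ (d⁻¹ : ℝ) ∂μ i) *
          ∏ j with i ∉ W j, G j x ^ (d⁻¹ : ℝ) :=
        lintegral_mul_const _ (Finset.measurable_prod _ fun j _ =>
          ((hG j).comp (measurable_update x)).pow_const _)
    _ ≤ _ := by
        gcongr
        refine ENNReal.lintegral_prod_norm_pow_le _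
          (fun j _ => ((hG j).comp (measurable_update x)).aemeasurable) ?_ fun _ _ => by positivity
        rw [sum_const, hd, nsmul_eq_mul, mul_inv_cancel₀ (Nat.cast_ne_zero.2 hd0)]

variable [∀ i, SigmaFinite (μ i)]

/-- Finner's inequality, in marginal form. -/
theorem lmarginal_prod_rpow_le {f : J → (∀ i, X i) → ℝ≥0∞} (hf : ∀ j, Measurable (f j))
    (hdep : ∀ j, DependsOn (f j) (W j)) (hd : ∀ i, #{j | i ∈ W j} = d) (hd0 : d ≠ 0)
    (s : Finset δ) (x : ∀ i, X i) :
    (∫⋯∫⁻_s, (fun y => ∏ j, f j y ^ (d⁻¹ : ℝ)) ∂μ) x ≤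
      ∏ j, (∫⋯∫⁻_(s ∩ W j), f j ∂μ) x ^ (d⁻¹ : ℝ) := by
  induction s using Finset.induction generalizing x with
  | empty => simp
  | insert i s hi ih =>
    have hF : Measurable fun y => ∏ j, f j y ^ (d⁻¹ : ℝ) :=
      Finset.measurable_prod _ fun j _ => (hf j).pow_const _
    rw [lmarginal_insert _ hF hi, ← prod_filter_mul_prod_filter_not univ (fun j => i ∈ W j)]
    calc _ ≤ ∫⁻ t, ∏ j, (∫⋯∫⁻_(s ∩ W j), f j ∂μ) (update x i t) ^ (d⁻¹ : ℝ) ∂μ i :=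
          lintegral_mono fun t => ih _
      _ ≤ _ := lintegral_update_prod_rpow_le (fun j => (hf j).lmarginal μ)
          (fun j => (hdep j).lmarginal _) (hd i) hd0 x
      _ = _ := by
        congr 1 <;> refine prod_congr rfl fun j hj => ?_ <;> have hij := (mem_filter.1 hj).2
        · rw [insert_inter_of_mem hij,
            lmarginal_insert _ (hf j) fun h => hi (mem_of_mem_inter_left h)]
        · rw [insert_inter_of_notMem hij]

end Finner

theorem lintegral_pi_count {ι X : Type*} [Fintype ι] [DecidableEq ι] [Fintype X]
    [MeasurableSpace X] [MeasurableSingletonClass X] (f : (ι → X) → ℝ≥0∞) :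
    ∫⁻ x, f x ∂Measure.pi (fun _ => Measure.count) = ∑ x, f x := by
  simp [lintegral_fintype]

section Embeddings

variable {δ κ J X : Type*} [Fintype δ] [DecidableEq δ] [Fintype κ] [Fintype J]
  {e : J → κ → δ} {d : ℕ}

theorem lintegral_prod_comp_rpow_le [MeasurableSpace X] (ν : Measure X) [SigmaFinite ν]
    (he : ∀ j, Injective (e j)) (hd : ∀ i, #{j | ∃ a, e j a = i} = d) (hd0 : d ≠ 0)
    {g : J → (κ → X) → ℝ≥0∞} (hg : ∀ j, Measurable (g j)) :
    ∫⁻ x, ∏ j, g j (x ∘ e j) ^ (d⁻¹ : ℝ) ∂Measure.pi (fun _ => ν) ≤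
      ∏ j, (∫⁻ y, g j y ∂Measure.pi (fun _ => ν)) ^ (d⁻¹ : ℝ) := by
  classical
  rcases isEmpty_or_nonempty (δ → X) with hempty | ⟨⟨x⟩⟩
  · simp [lintegral_of_isEmpty]
  have hW : ∀ i, #{j | i ∈ univ.image (e j)} = d := fun i => by
    simpa only [mem_image, mem_univ, true_and] using hd i
  rw [lintegral_eq_lmarginal_univ x]
  refine (lmarginal_prod_rpow_le (W := fun j => univ.image (e j)) (fun j => (hg j).comp ?_)
    (fun j => ?_) hW hd0 univ x).trans_eq (prod_congr rfl fun j _ => ?_)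
  · exact measurable_pi_iff.mpr fun i => measurable_pi_apply (e j i)
  · intro y z hyz
    exact congrArg (g j) (funext fun a => hyz _ (by simp))
  · rw [univ_inter]
    have := lmarginal_image (μ := fun _ : δ => ν) (he j) univ (hg j) x
    simp only [lmarginal_univ] at this
    rw [← this]
    rfl

theorem sum_prod_comp_rpow_le [DecidableEq κ] [Fintype X] (he : ∀ j, Injective (e j))
    (hd : ∀ i, #{j | ∃ a, e j a = i} = d) (hd0 : d ≠ 0) {g : J → (κ → X) → ℝ}
    (hg : ∀ j y, 0 ≤ g j y) :
    ∑ x : δ → X, ∏ j, g j (x ∘ e j) ^ (d⁻¹ : ℝ) ≤ ∏ j, (∑ y : κ → X, g j y) ^ (d⁻¹ : ℝ) := by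
  let _ : MeasurableSpace X := ⊤
  have : MeasurableSingletonClass X := ⟨fun _ => trivial⟩
  have h := lintegral_prod_comp_rpow_le Measure.count he hd hd0
    (g := fun j y => ENNReal.ofReal (g j y)) fun j => measurable_of_finite _
  simp only [lintegral_pi_count] at h
  have hexp : (0 : ℝ) ≤ (d : ℝ)⁻¹ := by positivity
  have hsum : ∀ j, 0 ≤ ∑ y, g j y := fun j => sum_nonneg fun y _ => hg j y
  simp_rw [ENNReal.ofReal_rpow_of_nonneg (hg _ _) hexp,
    ← ENNReal.ofReal_sum_of_nonneg (fun y _ => hg _ y),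
    ENNReal.ofReal_rpow_of_nonneg (hsum _) hexp,
    ← ENNReal.ofReal_prod_of_nonneg (fun j _ => Real.rpow_nonneg (hg _ _) _),
    ← ENNReal.ofReal_sum_of_nonneg (fun x _ => prod_nonneg fun j _ => Real.rpow_nonneg (hg _ _) _),
    ← ENNReal.ofReal_prod_of_nonneg (fun j _ => Real.rpow_nonneg (hsum j) _)] at h
  exact (ENNReal.ofReal_le_ofReal_iff (prod_nonneg fun j _ => Real.rpow_nonneg (hsum j) _)).1 h

end Embeddings

theorem card_filter_exists_add_eq {G κ : Type*} [AddGroup G] [Fintype G] [DecidableEq G]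
    [Fintype κ] {e : κ → G} (he : Injective e) (c : G) :
    #{g : G | ∃ a, e a + g = c} = Fintype.card κ := by
  have : ({g : G | ∃ a, e a + g = c} : Finset G) = univ.image fun a => -e a + c := by
    ext g
    simp only [mem_filter, mem_univ, true_and, mem_image]
    exact exists_congr fun a => by rw [neg_add_eq_iff_eq_add, eq_comm]
  rw [this, card_image_of_injective _ fun a b h => he (neg_injective (add_left_injective c h)),
    card_univ]

section Torus

variable {X : Type*} {m n k l : ℕ}

def torusWindow (q : Fin m → Fin n → X) (ij : Fin m × Fin n) : Fin k → Fin l → X :=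
  fun a b => q ⟨(ij.1 + a) % m, Nat.mod_lt _ ij.1.pos⟩ ⟨(ij.2 + b) % n, Nat.mod_lt _ ij.2.pos⟩

theorem cycCount_eq_card_torusWindow [DecidableEq X] (q : Fin m → Fin n → X)
    (w : Fin k → Fin l → X) : cycCount q w = #{ij | torusWindow q ij = w} := by
  simp only [cycCount, torusWindow, funext_iff]

variable [Fintype X] [DecidableEq X]

theorem sum_cycCount (q : Fin m → Fin n → X) : ∑ w : Fin k → Fin l → X, cycCount q w = m * n := by
  simp_rw [cycCount_eq_card_torusWindow]
  rw [← card_eq_sum_card_fiberwise fun _ _ => mem_coe.2 (mem_univ _), card_univ,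
    Fintype.card_prod, Fintype.card_fin, Fintype.card_fin]

theorem prod_torusWindow {M : Type*} [CommMonoid M] (q : Fin m → Fin n → X)
    (g : (Fin k → Fin l → X) → M) :
    ∏ ij, g (torusWindow q ij) = ∏ w, g w ^ cycCount q w := by
  rw [← prod_fiberwise' univ (torusWindow q) g]
  refine prod_congr rfl fun w _ => ?_
  rw [prod_const, cycCount_eq_card_torusWindow]

end Torus

section WindowCells

variable {m n k l : ℕ} (hkm : k ≤ m) (hln : l ≤ n)

def windowCell (ij : Fin m × Fin n) (ab : Fin k × Fin l) : Fin m × Fin n :=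
  Prod.map (Fin.castLE hkm) (Fin.castLE hln) ab + ij

theorem curry_comp_windowCell {X : Type*} (x : Fin m × Fin n → X) (ij : Fin m × Fin n) :
    Function.curry (x ∘ windowCell hkm hln ij) = torusWindow (Function.curry x) ij := by
  have hidx : ∀ {k m : ℕ} (hkm : k ≤ m) (i : Fin m) (a : Fin k) h,
      Fin.castLE hkm a + i = (⟨((i : ℕ) + a) % m, h⟩ : Fin m) := fun _ i a _ => by
    ext
    simp [Fin.val_add, add_comm]
  ext a b
  exact congrArg x (Prod.ext (hidx hkm ij.1 a _) (hidx hln ij.2 b _))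

theorem windowCell_injective (ij : Fin m × Fin n) : Injective (windowCell hkm hln ij) :=
  (add_left_injective ij).comp ((Fin.castLE_injective hkm).prodMap (Fin.castLE_injective hln))

variable [NeZero m] [NeZero n]

theorem card_filter_mem_range_windowCell (c : Fin m × Fin n) :
    #{ij | ∃ ab, windowCell hkm hln ij ab = c} = k * l := by
  refine (card_filter_exists_add_eq
    ((Fin.castLE_injective hkm).prodMap (Fin.castLE_injective hln)) c).trans ?_
  simp

end WindowCells

section SameCounts

variable {X : Type*} [Fintype X] [DecidableEq X] {m n : ℕ}

def sameCounts (k l : ℕ) (p : Fin m → Fin n → X) : Finset (Fin m → Fin n → X) :=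
  {q | ∀ w : Fin k → Fin l → X, cycCount q w = cycCount p w}

theorem TSet_subset_sameCounts (k l : ℕ) (p : Fin m → Fin n → X) :
    TSet m n k l p ⊆ sameCounts k l p :=
  monotone_filter_right univ fun _ _ h => h.2

theorem mem_sameCounts_self (k l : ℕ) (p : Fin m → Fin n → X) : p ∈ sameCounts k l p := by
  simp [sameCounts]

variable {k l : ℕ}

theorem card_sameCounts_mul_le_one (hk1 : 1 ≤ k) (hkm : k ≤ m) (hl1 : 1 ≤ l) (hln : l ≤ n)
    (p : Fin m → Fin n → X) :
    (#(sameCounts k l p) : ℝ) *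
      (∏ w : Fin k → Fin l → X, ((cycCount p w : ℝ) / (m * n)) ^ cycCount p w) ^
        ((k * l : ℕ) : ℝ)⁻¹ ≤ 1 := by
  have : NeZero m := ⟨by omega⟩
  have : NeZero n := ⟨by omega⟩
  set P : (Fin k → Fin l → X) → ℝ := fun w => cycCount p w / (m * n)
  have hP0 : ∀ w, 0 ≤ P w := fun w => by positivity
  have hP1 : ∑ w, P w = 1 := by
    rw [← sum_div, ← Nat.cast_sum, sum_cycCount, Nat.cast_mul,
      div_self (mul_ne_zero (Nat.cast_ne_zero.2 (NeZero.ne m)) (Nat.cast_ne_zero.2 (NeZero.ne n)))]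
  set r : ℝ := ((k * l : ℕ) : ℝ)⁻¹
  calc (#(sameCounts k l p) : ℝ) * (∏ w, P w ^ cycCount p w) ^ r
      = ∑ q ∈ sameCounts k l p, ∏ ij, P (torusWindow q ij) ^ r := by
        rw [sum_congr rfl fun q hq => ?_, sum_const, nsmul_eq_mul]
        rw [Real.finsetProd_rpow _ _ (fun _ _ => hP0 _), prod_torusWindow]
        simp_rw [(mem_filter.1 hq).2]
    _ ≤ ∑ q, ∏ ij, P (torusWindow q ij) ^ r :=
        sum_le_univ_sum_of_nonneg fun q => prod_nonneg fun _ _ => Real.rpow_nonneg (hP0 _) _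
    _ = ∑ x : Fin m × Fin n → X, ∏ ij, P (Function.curry (x ∘ windowCell hkm hln ij)) ^ r :=
        (Fintype.sum_equiv (Equiv.curry _ _ _) _ _ fun x => by
          simp only [curry_comp_windowCell]; rfl).symm
    _ ≤ ∏ _ij : Fin m × Fin n, (∑ y : Fin k × Fin l → X, P (Function.curry y)) ^ r :=
        sum_prod_comp_rpow_le (windowCell_injective hkm hln)
          (card_filter_mem_range_windowCell hkm hln) (by positivity)
          (g := fun _ y => P (Function.curry y)) fun _ _ => hP0 _
    _ = 1 := by
        have hsum : ∑ y : Fin k × Fin l → X, P (Function.curry y) = 1 :=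
          (Fintype.sum_equiv (Equiv.curry _ _ _) _ P fun _ => rfl).trans hP1
        simp [hsum]

theorem logb_card_sameCounts_le (hk1 : 1 ≤ k) (hkm : k ≤ m) (hl1 : 1 ≤ l) (hln : l ≤ n)
    (p : Fin m → Fin n → X) :
    Real.logb 2 #(sameCounts k l p) ≤ -(((k * l : ℕ) : ℝ)⁻¹ * ∑ w : Fin k → Fin l → X,
      (cycCount p w : ℝ) * Real.logb 2 ((cycCount p w : ℝ) / (m * n))) := by
  have hmn : (0 : ℝ) < m * n := mul_pos (Nat.cast_pos.2 (by omega)) (Nat.cast_pos.2 (by omega))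
  have hfactor : ∀ w : Fin k → Fin l → X, 0 < ((cycCount p w : ℝ) / (m * n)) ^ cycCount p w := by
    intro w
    rcases (cycCount p w).eq_zero_or_pos with h | h
    · simp [h]
    · exact pow_pos (div_pos (Nat.cast_pos.2 h) hmn) _
  set Q := ∏ w : Fin k → Fin l → X, ((cycCount p w : ℝ) / (m * n)) ^ cycCount p w
  have hQ : 0 < Q := prod_pos fun w _ => hfactor w
  have hcard : (#(sameCounts k l p) : ℝ) ≤ (Q ^ ((k * l : ℕ) : ℝ)⁻¹)⁻¹ := by
    rw [← one_div, le_div_iff₀ (Real.rpow_pos_of_pos hQ _)]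
    exact card_sameCounts_mul_le_one hk1 hkm hl1 hln p
  calc Real.logb 2 #(sameCounts k l p) ≤ Real.logb 2 (Q ^ ((k * l : ℕ) : ℝ)⁻¹)⁻¹ :=
        Real.logb_le_logb_of_le one_lt_two
          (Nat.cast_pos.2 (card_pos.2 ⟨p, mem_sameCounts_self k l p⟩)) hcard
    _ = _ := by
        rw [Real.logb_inv, Real.logb_rpow_eq_mul_logb_of_pos hQ,
          Real.logb_prod _ _ fun w _ => (hfactor w).ne']
        simp_rw [Real.logb_pow]

end SameCounts

theorem log_card_TSet_le_general {X : Type*} [Fintype X] [DecidableEq X] {m n k l : ℕ}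
    (hk1 : 1 ≤ k) (hkm : k ≤ m) (hl1 : 1 ≤ l) (hln : l ≤ n)
    (p : Fin m → Fin n → X) :
    Real.logb 2 ((TSet m n k l p).card) ≤
      -(((m : ℝ) * n) / ((k : ℝ) * l)) *
        ∑ w : Fin k → Fin l → X,
          ((cycCount p w : ℝ) / ((m : ℝ) * n)) *
            Real.logb 2 ((cycCount p w : ℝ) / ((m : ℝ) * n)) := by
  have hU : (1 : ℝ) ≤ #(sameCounts k l p) :=
    Nat.one_le_cast.2 (card_pos.2 ⟨p, mem_sameCounts_self k l p⟩)
  have hTU : Real.logb 2 #(TSet m n k l p) ≤ Real.logb 2 #(sameCounts k l p) := by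
    rcases (#(TSet m n k l p)).eq_zero_or_pos with h | h
    · rw [h, Nat.cast_zero, Real.logb_zero]
      exact Real.logb_nonneg one_lt_two hU
    · exact Real.logb_le_logb_of_le one_lt_two (Nat.cast_pos.2 h)
        (Nat.cast_le.2 (card_le_card (TSet_subset_sameCounts k l p)))
  refine (hTU.trans (logb_card_sameCounts_le hk1 hkm hl1 hln p)).trans_eq ?_
  have hm : (m : ℝ) ≠ 0 := Nat.cast_ne_zero.2 (by omega)
  have hn : (n : ℝ) ≠ 0 := Nat.cast_ne_zero.2 (by omega)
  rw [mul_sum, mul_sum, ← sum_neg_distrib]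
  refine sum_congr rfl fun w _ => ?_
  push_cast
  field_simp

/-- combinatorial bound
`log₂ |T(p,k,l)| ≤ −(mn/(kl)) Σ_w (N(w|p)/(mn)) log₂ (N(w|p)/(mn))`. -/
theorem log_card_TSet_le {X : Type*} [Fintype X] [DecidableEq X] {m n k l : ℕ}
    (hk1 : 1 ≤ k) (hkm : k ≤ m) (hl1 : 1 ≤ l) (hln : l ≤ n)
    (p : Fin m → Fin n → X) (hp : Primitive p) :
    Real.logb 2 ((TSet m n k l p).card) ≤
      -(((m : ℝ) * n) / ((k : ℝ) * l)) *
        ∑ w : Fin k → Fin l → X,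
          ((cycCount p w : ℝ) / ((m : ℝ) * n)) *
            Real.logb 2 ((cycCount p w : ℝ) / ((m : ℝ) * n)) :=
  log_card_TSet_le_general hk1 hkm hl1 hln p
end

section
/- Let X^{[m,n]} be a sequence of random m×n blocks and K = K(m), L = L(n) with K²,L² = o(min(m,n)) and K,L → ∞. Then the normalized empirical (K×L)-block entropy of the cyclic counts converges to the sup-entropy rate: limsup_{m,n→∞} −(1/(KL)) Σ_{w∈X^{K×L}} E[N(w|X^{[m,n]})/(mn)] log₂ E[N(w|X^{[m,n]})/(mn)] = limsup_{m,n→∞} H(X^{[m,n]})/(mn), provided E[N(w|X^{[m,n]})/(mn)] → P_{X^{[K,L]}}(w) appropriately (the stationary marginal case). -/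
open Finset Filter MeasureTheory

/-- Shannon entropy (in bits) of a PMF on a finite type. -/
noncomputable def pmfEntropy {α : Type*} [Fintype α] (μ : PMF α) : ℝ :=
  -∑ a : α, (μ a).toReal * Real.logb 2 (μ a).toReal

/-- Expectation of `f` with respect to a PMF on a finite type. -/
noncomputable def pmfExp {α : Type*} [Fintype α] (μ : PMF α) (f : α → ℝ) : ℝ :=
  ∑ a : α, (μ a).toReal * f a

/-!
Tile the `m × n` torus by `(m / k) * (n / l)` disjoint `k × l` windows with a common corner
offset `s`. By subadditivity of entropy, `H(μ_{m,n})` is at most the sum of the window entropies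
plus `log |X|` for each of the at most `k n + m l` uncovered cells. Averaging over all `m n`
offsets and using concavity of entropy on the average window law, which by hypothesis is
`μ_{k,l}`, gives `H(μ_{m,n}) / (m n) ≤ H(μ_{k,l}) / (k l) + (k / m + l / n) log₂ |X|`.
By the same hypothesis the left-hand side of the theorem is the entropy rate along
`(K m, L n)`. The error vanishes for `k = K m`, `l = L n`, so the limsup of the entropy rate is at
most its limsup along `(K, L)`; the converse holds because `(K m, L n) → ∞`.
-/

open Real Topology

section Entropy

universe u

variable {α : Type*} [Fintype α]

noncomputable def entropy (p : α → ℝ) : ℝ := ∑ a, negMulLog (p a)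

lemma entropy_nonneg {p : α → ℝ} (hp : ∀ a, 0 ≤ p a) (hp1 : ∑ a, p a = 1) : 0 ≤ entropy p :=
  sum_nonneg fun a _ => negMulLog_nonneg (hp a)
    (hp1 ▸ single_le_sum (fun a _ => hp a) (mem_univ a))

lemma entropy_le_neg_sum_mul_log {p q : α → ℝ} (hp : ∀ a, 0 ≤ p a) (hq : ∀ a, 0 ≤ q a)
    (hsum : ∑ a, q a ≤ ∑ a, p a) (hpq : ∀ a, p a ≠ 0 → q a ≠ 0) :
    entropy p ≤ -∑ a, p a * log (q a) := by
  have termwise : ∀ a, negMulLog (p a) + p a * log (q a) ≤ q a - p a := by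
    intro a
    rcases (hp a).eq_or_lt with h | h
    · simp [← h, hq a]
    · have hqa : 0 < q a := (hq a).lt_of_ne' (hpq a h.ne')
      have := mul_le_mul_of_nonneg_left (log_le_sub_one_of_pos (div_pos hqa h)) h.le
      rw [log_div hqa.ne' h.ne', mul_sub_one, mul_div_cancel₀ _ h.ne'] at this
      rw [negMulLog]
      linarith
  have := sum_le_sum fun a (_ : a ∈ univ) => termwise a
  simp only [sum_add_distrib, sum_sub_distrib] at this
  rw [entropy]
  linarith

lemma entropy_le_log_card {p : α → ℝ} (hp : ∀ a, 0 ≤ p a) (hp1 : ∑ a, p a = 1) :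
    entropy p ≤ log (Fintype.card α) := by
  have hcard : (Fintype.card α : ℝ)⁻¹ ≠ 0 := by
    have : Nonempty α := by
      by_contra h
      simp [not_nonempty_iff.mp h] at hp1
    simp [Fintype.card_ne_zero]
  calc entropy p ≤ -∑ a, p a * log (Fintype.card α : ℝ)⁻¹ :=
        entropy_le_neg_sum_mul_log hp (fun _ => by positivity)
          (by simp [hp1, mul_inv_le_one]) fun _ _ => hcard
    _ = log (Fintype.card α) := by rw [← sum_mul, hp1, log_inv]; ring

lemma sum_entropy_le_card_mul_entropy_average {ι : Type*} [Fintype ι] [Nonempty ι]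
    (ν : ι → α → ℝ) (hν : ∀ i a, 0 ≤ ν i a) :
    ∑ i, entropy (ν i) ≤ Fintype.card ι * entropy fun a => (∑ i, ν i a) / Fintype.card ι := by
  have hcard : (0 : ℝ) < Fintype.card ι := by exact_mod_cast Fintype.card_pos
  simp_rw [entropy, mul_sum]
  rw [sum_comm]
  refine sum_le_sum fun a _ => ?_
  have jensen := concaveOn_negMulLog.le_map_sum (t := univ)
    (w := fun _ => (Fintype.card ι : ℝ)⁻¹) (p := fun i => ν i a) (fun _ _ => by positivity)
    (by simp [hcard.ne']) fun i _ => Set.mem_Ici.mpr (hν i a)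
  simp only [smul_eq_mul, ← mul_sum] at jensen
  rwa [inv_mul_eq_div, inv_mul_eq_div, div_le_iff₀ hcard, mul_comm] at jensen

variable {β : Type*} [DecidableEq β]

noncomputable def pushMass (f : α → β) (p : α → ℝ) (b : β) : ℝ := ∑ a with f a = b, p a

lemma pushMass_nonneg {f : α → β} {p : α → ℝ} (hp : ∀ a, 0 ≤ p a) (b : β) :
    0 ≤ pushMass f p b :=
  sum_nonneg fun a _ => hp a

lemma le_pushMass {f : α → β} {p : α → ℝ} (hp : ∀ a, 0 ≤ p a) (a : α) :
    p a ≤ pushMass f p (f a) :=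
  single_le_sum (fun a _ => hp a) (by simp)

lemma sum_pushMass_mul [Fintype β] (f : α → β) (p : α → ℝ) (g : β → ℝ) :
    ∑ b, pushMass f p b * g b = ∑ a, p a * g (f a) := by
  simp_rw [pushMass, sum_mul]
  rw [← sum_fiberwise univ f (fun a => p a * g (f a))]
  exact sum_congr rfl fun b _ => sum_congr rfl fun a ha => by rw [(mem_filter.mp ha).2]

lemma sum_pushMass [Fintype β] (f : α → β) (p : α → ℝ) : ∑ b, pushMass f p b = ∑ a, p a := by
  simpa using sum_pushMass_mul f p 1

/-- Gibbs' inequality against the product of the marginals. -/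
lemma entropy_le_sum_entropy_pushMass {ι : Type*} [Fintype ι] {β : ι → Type*}
    [∀ i, Fintype (β i)] [∀ i, DecidableEq (β i)] (F : ∀ i, α → β i)
    (hF : Function.Injective fun a i => F i a) {p : α → ℝ} (hp : ∀ a, 0 ≤ p a)
    (hp1 : ∑ a, p a = 1) :
    entropy p ≤ ∑ i, entropy (pushMass (F i) p) := by
  classical
  set q := fun i => pushMass (F i) p
  have hq : ∀ i b, 0 ≤ q i b := fun i => pushMass_nonneg hp
  have hpq : ∀ a i, p a ≤ q i (F i a) := fun a i => le_pushMass hp a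
  have hprod_sum : ∑ a, ∏ i, q i (F i a) ≤ ∑ a, p a :=
    calc ∑ a, ∏ i, q i (F i a) = ∑ x ∈ univ.map ⟨_, hF⟩, ∏ i, q i (x i) :=
          (sum_map univ ⟨_, hF⟩ fun x => ∏ i, q i (x i)).symm
      _ ≤ ∑ x : ∀ i, β i, ∏ i, q i (x i) :=
          sum_le_univ_sum_of_nonneg fun x => prod_nonneg fun i _ => hq i _
      _ = ∑ a, p a := by
          rw [← Fintype.prod_sum, hp1]
          exact prod_eq_one fun i _ => (sum_pushMass (F i) p).trans hp1
  have hlog : ∀ a, p a * log (∏ i, q i (F i a)) = ∑ i, p a * log (q i (F i a)) := by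
    intro a
    rcases (hp a).eq_or_lt with h | h
    · simp [← h]
    · rw [log_prod fun i _ => (h.trans_le (hpq a i)).ne', mul_sum]
  calc entropy p ≤ -∑ a, p a * log (∏ i, q i (F i a)) :=
        entropy_le_neg_sum_mul_log hp (fun a => prod_nonneg fun i _ => hq i _) hprod_sum
          fun a ha => prod_ne_zero_iff.mpr fun i _ =>
            ((hp a).lt_of_ne' ha |>.trans_le (hpq a i)).ne'
    _ = ∑ i, entropy (q i) := by
        simp_rw [hlog, entropy, negMulLog]
        rw [sum_comm, ← sum_neg_distrib]
        refine sum_congr rfl fun i _ => ?_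
        rw [← sum_pushMass_mul (F i) p (fun b => log (q i b)), ← sum_neg_distrib]
        exact sum_congr rfl fun b _ => (neg_mul _ _).symm

lemma entropy_le_sum_entropy_pushMass_add_card_mul_log {ι κ : Type*} [Fintype ι] [Fintype κ]
    {γ δ : Type u} [Fintype γ] [DecidableEq γ] [Fintype δ] [DecidableEq δ]
    (F : ι → α → γ) (G : κ → α → δ)
    (hFG : Function.Injective fun a => ((fun i => F i a), fun k => G k a)) {p : α → ℝ}
    (hp : ∀ a, 0 ≤ p a) (hp1 : ∑ a, p a = 1) :
    entropy p ≤ ∑ i, entropy (pushMass (F i) p) + Fintype.card κ * log (Fintype.card δ) := by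
  let β : ι ⊕ κ → Type u := Sum.elim (fun _ => γ) (fun _ => δ)
  let _ : ∀ j, Fintype (β j) := Sum.rec (fun _ => ‹_›) (fun _ => ‹_›)
  let _ : ∀ j, DecidableEq (β j) := Sum.rec (fun _ => ‹_›) (fun _ => ‹_›)
  let H : ∀ j, α → β j := Sum.rec F G
  have hH : Function.Injective fun a j => H j a := fun a a' h =>
    hFG (Prod.ext (funext fun i => congrFun h (.inl i)) (funext fun k => congrFun h (.inr k)))
  calc entropy p ≤ ∑ j, entropy (pushMass (H j) p) :=
        entropy_le_sum_entropy_pushMass H hH hp hp1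
    _ = ∑ i, entropy (pushMass (F i) p) + ∑ k, entropy (pushMass (G k) p) :=
        Fintype.sum_sum_type _
    _ ≤ ∑ i, entropy (pushMass (F i) p) + Fintype.card κ * log (Fintype.card δ) := by
        gcongr
        simpa using sum_le_card_nsmul univ _ _ fun k _ =>
          entropy_le_log_card (pushMass_nonneg hp) ((sum_pushMass (G k) p).trans hp1)

end Entropy

section Torus

open Fin.NatCast

variable {X : Type*} {m n : ℕ} [NeZero m] [NeZero n]

def window (k l : ℕ) (ij : Fin m × Fin n) (q : Fin m → Fin n → X) : Fin k → Fin l → X :=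
  fun a b => q (ij.1 + (a : ℕ)) (ij.2 + (b : ℕ))

lemma cycCount_eq_card_window [DecidableEq X] {k l : ℕ} (q : Fin m → Fin n → X)
    (w : Fin k → Fin l → X) : cycCount q w = #{ij | window k l ij q = w} := by
  have hmod : ∀ {N : ℕ} [NeZero N] (i : Fin N) (a : ℕ) (h : ((i : ℕ) + a) % N < N),
      (⟨((i : ℕ) + a) % N, h⟩ : Fin N) = i + (a : ℕ) :=
    fun i a _ => Fin.ext (by simp [Fin.val_add])
  simp only [cycCount, hmod, window, funext_iff]

lemma sum_pushMass_window [Fintype X] [DecidableEq X] {k l : ℕ}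
    (p : (Fin m → Fin n → X) → ℝ) (w : Fin k → Fin l → X) :
    ∑ ij, pushMass (window k l ij) p w = ∑ q, p q * cycCount q w := by
  simp only [pushMass, sum_filter, cycCount_eq_card_window, card_filter, Nat.cast_sum, mul_sum]
  rw [sum_comm]
  exact sum_congr rfl fun q _ => sum_congr rfl fun ij _ => by split_ifs <;> simp

lemma exists_eq_add_natCast_mul_add {k : ℕ} (hk : 0 < k) {s x : Fin m}
    (hx : ((x - s : Fin m) : ℕ) < m / k * k) :
    ∃ c : Fin (m / k), ∃ a : Fin k, x = s + ((c * k : ℕ) : Fin m) + (a : ℕ) := by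
  refine ⟨⟨(x - s : Fin m) / k, Nat.div_lt_of_lt_mul (by rwa [mul_comm])⟩,
    ⟨(x - s : Fin m) % k, Nat.mod_lt _ hk⟩, ?_⟩
  rw [add_assoc, ← Nat.cast_add, Fin.val_mk, Fin.val_mk, Nat.div_add_mod', Fin.cast_val_eq_self,
    add_sub_cancel]

lemma card_filter_not_sub_lt (s : Fin m) (k : ℕ) :
    #{x : Fin m | ¬ ((x - s : Fin m) : ℕ) < m / k * k} = m % k := by
  rw [card_equiv (Equiv.subRight s) (t := {y : Fin m | ¬ (y : ℕ) < m / k * k}) (by simp)]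
  have := card_filter_add_card_filter_not (s := (univ : Finset (Fin m)))
    (fun y => (y : ℕ) < m / k * k)
  rw [Fin.card_filter_val_lt, card_univ, Fintype.card_fin,
    min_eq_right (Nat.div_mul_le_self m k)] at this
  have := Nat.div_add_mod' m k
  omega

lemma card_filter_not_tiled_le {k l : ℕ} (hk : 0 < k) (hl : 0 < l) (s : Fin m × Fin n) :
    #{z : Fin m × Fin n | ¬ (((z.1 - s.1 : Fin m) : ℕ) < m / k * k ∧
      ((z.2 - s.2 : Fin n) : ℕ) < n / l * l)} ≤ k * n + m * l := by
  have hsub : ({z | ¬ (((z.1 - s.1 : Fin m) : ℕ) < m / k * k ∧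
      ((z.2 - s.2 : Fin n) : ℕ) < n / l * l)} : Finset (Fin m × Fin n)) ⊆
      ({x | ¬ ((x - s.1 : Fin m) : ℕ) < m / k * k} : Finset (Fin m)) ×ˢ univ ∪
        univ ×ˢ ({y | ¬ ((y - s.2 : Fin n) : ℕ) < n / l * l} : Finset (Fin n)) := by
    intro z hz
    simpa only [mem_filter, mem_union, mem_product, mem_univ, true_and, and_true,
      not_and_or] using hz
  have := (card_le_card hsub).trans (card_union_le _ _)
  simp only [card_product, card_filter_not_sub_lt, card_univ, Fintype.card_fin] at this
  have hmk := Nat.mod_lt m hk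
  have hnl := Nat.mod_lt n hl
  exact this.trans (by gcongr)

def tileCorner (k l : ℕ) (s : Fin m × Fin n) (cd : Fin (m / k) × Fin (n / l)) : Fin m × Fin n :=
  s + (((cd.1 * k : ℕ) : Fin m), ((cd.2 * l : ℕ) : Fin n))

variable [Fintype X] [DecidableEq X]

lemma entropy_le_sum_entropy_tiles {k l : ℕ} (hk : 0 < k) (hl : 0 < l)
    {p : (Fin m → Fin n → X) → ℝ} (hp : ∀ q, 0 ≤ p q) (hp1 : ∑ q, p q = 1) (s : Fin m × Fin n) :
    entropy p ≤ ∑ cd, entropy (pushMass (window k l (tileCorner k l s cd)) p)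
      + (k * n + m * l) * log (Fintype.card X) := by
  set R : Finset (Fin m × Fin n) := {z | ¬ (((z.1 - s.1 : Fin m) : ℕ) < m / k * k ∧
    ((z.2 - s.2 : Fin n) : ℕ) < n / l * l)}
  have hR : (#R : ℝ) ≤ k * n + m * l := by exact_mod_cast card_filter_not_tiled_le hk hl s
  -- `q` is determined by its tiles together with its values on the uncovered cells `R`.
  have hinj : Function.Injective fun q : Fin m → Fin n → X =>
      ((fun cd => window k l (tileCorner k l s cd) q), fun z : R => q z.1.1 z.1.2) := by
    intro q q' h
    simp only [Prod.mk.injEq, funext_iff] at h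
    funext x y
    by_cases hxy : ((x - s.1 : Fin m) : ℕ) < m / k * k ∧ ((y - s.2 : Fin n) : ℕ) < n / l * l
    · obtain ⟨c, a, rfl⟩ := exists_eq_add_natCast_mul_add hk hxy.1
      obtain ⟨d, b, rfl⟩ := exists_eq_add_natCast_mul_add hl hxy.2
      exact h.1 (c, d) a b
    · exact h.2 ⟨(x, y), by simpa [R] using hxy⟩
  calc entropy p
      ≤ ∑ cd, entropy (pushMass (window k l (tileCorner k l s cd)) p)
          + #R * log (Fintype.card X) := by
        simpa using entropy_le_sum_entropy_pushMass_add_card_mul_log _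
          (fun (z : R) q => q z.1.1 z.1.2) hinj hp hp1
    _ ≤ _ := by gcongr

/-- Summed over all offsets `s`, every window position is used `(m / k) * (n / l)` times. -/
lemma card_mul_entropy_le_sum_entropy_window {k l : ℕ} (hk : 0 < k) (hl : 0 < l)
    {p : (Fin m → Fin n → X) → ℝ} (hp : ∀ q, 0 ≤ p q) (hp1 : ∑ q, p q = 1) :
    (m * n : ℝ) * entropy p
      ≤ (m / k * (n / l) : ℕ) * ∑ ij, entropy (pushMass (window k l ij) p)
        + (m * n : ℝ) * ((k * n + m * l) * log (Fintype.card X)) := by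
  have hshift : ∀ cd : Fin (m / k) × Fin (n / l),
      ∑ s, entropy (pushMass (window k l (tileCorner k l s cd)) p)
        = ∑ ij, entropy (pushMass (window k l ij) p) :=
    fun cd => Equiv.sum_comp (Equiv.addRight _) fun ij => entropy (pushMass (window k l ij) p)
  have := sum_le_sum fun s (_ : s ∈ univ) => entropy_le_sum_entropy_tiles hk hl hp hp1 s
  rw [sum_add_distrib, sum_comm, sum_congr rfl fun cd _ => hshift cd] at this
  simpa [mul_comm] using this

lemma entropy_div_le_entropy_cycCount_average {k l : ℕ} (hk : 0 < k) (hl : 0 < l)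
    {p : (Fin m → Fin n → X) → ℝ} (hp : ∀ q, 0 ≤ p q) (hp1 : ∑ q, p q = 1) :
    entropy p / (m * n) ≤
      entropy (fun w : Fin k → Fin l → X => ∑ q, p q * (cycCount q w / (m * n))) / (k * l)
        + (k / m + l / n) * log (Fintype.card X) := by
  set S := ∑ ij, entropy (pushMass (window k l ij) p)
  set r := fun w : Fin k → Fin l → X => ∑ q, p q * (cycCount q w / (m * n))
  have hm : (0 : ℝ) < m := by exact_mod_cast Nat.pos_of_neZero m
  have hn : (0 : ℝ) < n := by exact_mod_cast Nat.pos_of_neZero n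
  have hmn : (0 : ℝ) < m * n := by positivity
  have hS : 0 ≤ S := sum_nonneg fun ij _ =>
    entropy_nonneg (pushMass_nonneg hp) ((sum_pushMass _ p).trans hp1)
  have hjensen : S ≤ m * n * entropy r := by
    have hr : r = fun w =>
        (∑ ij, pushMass (window k l ij) p w) / Fintype.card (Fin m × Fin n) := by
      simp_rw [sum_pushMass_window, sum_div, mul_div_assoc, Fintype.card_prod, Fintype.card_fin,
        Nat.cast_mul, r]
    have := sum_entropy_le_card_mul_entropy_average
      (fun ij : Fin m × Fin n => pushMass (window k l ij) p) fun ij => pushMass_nonneg hp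
    rwa [← hr, Fintype.card_prod, Fintype.card_fin, Fintype.card_fin, Nat.cast_mul] at this
  have htiles : ((m / k * (n / l) : ℕ) : ℝ) ≤ m * n / (k * l) := by
    rw [Nat.cast_mul, mul_div_mul_comm]
    gcongr <;> exact Nat.cast_div_le
  have hmain : (m * n : ℝ) * entropy p
      ≤ m * n * (m * n * entropy r / (k * l) + (k * n + m * l) * log (Fintype.card X)) :=
    calc (m * n : ℝ) * entropy p ≤ _ := card_mul_entropy_le_sum_entropy_window hk hl hp hp1
      _ ≤ m * n / (k * l) * (m * n * entropy r)
            + (m * n : ℝ) * ((k * n + m * l) * log (Fintype.card X)) := by gcongr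
      _ = _ := by ring
  rw [div_le_iff₀ hmn]
  calc entropy p ≤ m * n * entropy r / (k * l) + (k * n + m * l) * log (Fintype.card X) :=
        le_of_mul_le_mul_left hmain hmn
    _ = _ := by field_simp

end Torus

lemma PMF.sum_toReal_eq_one {α : Type*} [Fintype α] (μ : PMF α) : ∑ a, (μ a).toReal = 1 := by
  have h := μ.tsum_coe
  rw [tsum_fintype] at h
  rw [← ENNReal.toReal_sum fun a _ => μ.apply_ne_top a, h, ENNReal.toReal_one]

section BlockEntropy

variable {α : Type*} [Fintype α]

lemma pmfEntropy_eq_entropy_div_log_two (μ : PMF α) :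
    pmfEntropy μ = entropy (fun a => (μ a).toReal) / log 2 := by
  simp only [pmfEntropy, entropy, negMulLog, logb, sum_div, ← sum_neg_distrib]
  exact sum_congr rfl fun a _ => by ring

lemma pmfEntropy_nonneg (μ : PMF α) : 0 ≤ pmfEntropy μ := by
  rw [pmfEntropy_eq_entropy_div_log_two]
  exact div_nonneg (entropy_nonneg (fun _ => ENNReal.toReal_nonneg) μ.sum_toReal_eq_one)
    (log_nonneg one_le_two)

lemma pmfEntropy_le_logb_card (μ : PMF α) : pmfEntropy μ ≤ logb 2 (Fintype.card α) := by
  rw [pmfEntropy_eq_entropy_div_log_two, logb]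
  gcongr
  exact entropy_le_log_card (fun _ => ENNReal.toReal_nonneg) μ.sum_toReal_eq_one

variable {X : Type*} [Fintype X]

lemma pmfEntropy_div_le_logb_card {m n : ℕ} (μ : PMF (Fin m → Fin n → X)) :
    pmfEntropy μ / (m * n) ≤ logb 2 (Fintype.card X) := by
  rcases eq_or_ne ((m : ℝ) * n) 0 with h | h
  · rw [h, div_zero]
    exact div_nonneg (log_natCast_nonneg _) (log_nonneg one_le_two)
  rw [div_le_iff₀' (lt_of_le_of_ne (by positivity) h.symm)]
  calc pmfEntropy μ ≤ logb 2 (Fintype.card (Fin m → Fin n → X)) := pmfEntropy_le_logb_card μ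
    _ = m * n * logb 2 (Fintype.card X) := by simp [← pow_mul, logb_pow, mul_comm]

lemma pmfEntropy_div_le_of_cycCount [DecidableEq X] {m n k l : ℕ} [NeZero m] [NeZero n]
    (hk : 0 < k) (hl : 0 < l) (μ : PMF (Fin m → Fin n → X)) (ν : PMF (Fin k → Fin l → X))
    (hν : ∀ w, pmfExp μ (fun q => (cycCount q w : ℝ) / (m * n)) = (ν w).toReal) :
    pmfEntropy μ / (m * n)
      ≤ pmfEntropy ν / (k * l) + (k / m + l / n) * logb 2 (Fintype.card X) := by
  have key := entropy_div_le_entropy_cycCount_average hk hl (fun _ => ENNReal.toReal_nonneg)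
    μ.sum_toReal_eq_one
  rw [show (fun w => ∑ q, (μ q).toReal * (cycCount q w / (m * n))) = fun w => (ν w).toReal
    from funext hν] at key
  rw [pmfEntropy_eq_entropy_div_log_two, pmfEntropy_eq_entropy_div_log_two, logb]
  calc _ = entropy (fun q => (μ q).toReal) / (m * n) / log 2 := by ring
    _ ≤ (entropy (fun w => (ν w).toReal) / (k * l) + (k / m + l / n) * log (Fintype.card X))
          / log 2 := div_le_div_of_nonneg_right key (log_nonneg one_le_two)
    _ = _ := by ring

end BlockEntropy

lemma limsup_comp_eq_of_eventually_le_comp_add {ι : Type*} {F : Filter ι} [F.NeBot]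
    {f e : ι → ℝ} {φ : ι → ι} {a b : ℝ} (hf : ∀ x, f x ∈ Set.Icc a b) (hφ : Tendsto φ F F)
    (he : Tendsto e F (𝓝 0)) (h : f ≤ᶠ[F] f ∘ φ + e) :
    limsup (f ∘ φ) F = limsup f F := by
  have hle : ∀ {G : Filter ι} (g : ι → ι), G.IsBoundedUnder (· ≤ ·) (f ∘ g) := fun g =>
    isBoundedUnder_of ⟨b, fun x => (hf (g x)).2⟩
  have hge : ∀ {G : Filter ι} (g : ι → ι), G.IsBoundedUnder (· ≥ ·) (f ∘ g) := fun g =>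
    isBoundedUnder_of ⟨a, fun x => (hf (g x)).1⟩
  refine le_antisymm (hφ.limsup_comp_le_limsup (hge id).isCoboundedUnder_le (hle id)) ?_
  calc limsup f F ≤ limsup (f ∘ φ + e) F :=
        limsup_le_limsup h (hge id).isCoboundedUnder_le
          (isBoundedUnder_le_add (hle φ) he.isBoundedUnder_le)
    _ ≤ limsup (f ∘ φ) F + limsup e F :=
        limsup_add_le (hge φ) (hle φ) he.isCoboundedUnder_le he.isBoundedUnder_le
    _ = limsup (f ∘ φ) F := by rw [he.limsup_eq, add_zero]

lemma tendsto_natCast_div_of_tendsto_sq_div {K : ℕ → ℕ}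
    (h : Tendsto (fun m : ℕ => ((K m : ℝ) ^ 2) / m) atTop (𝓝 0)) :
    Tendsto (fun m : ℕ => (K m : ℝ) / m) atTop (𝓝 0) :=
  squeeze_zero (fun _ => by positivity)
    (fun m => by gcongr; exact_mod_cast Nat.le_self_pow two_ne_zero (K m)) h

theorem limsup_empirical_entropy_eq_sup_entropy_rate_general
    {X : Type*} [Fintype X] [DecidableEq X]
    (μ : ∀ m n : ℕ, PMF (Fin m → Fin n → X)) (K L : ℕ → ℕ)
    (hK : Filter.Tendsto K Filter.atTop Filter.atTop)
    (hL : Filter.Tendsto L Filter.atTop Filter.atTop)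
    (hKo : Filter.Tendsto (fun m : ℕ => ((K m : ℝ) ^ 2) / m) Filter.atTop (nhds 0))
    (hLo : Filter.Tendsto (fun n : ℕ => ((L n : ℝ) ^ 2) / n) Filter.atTop (nhds 0))
    (hmarg : ∀ m n : ℕ, 1 ≤ m → 1 ≤ n → ∀ w : Fin (K m) → Fin (L n) → X,
      pmfExp (μ m n) (fun q => (cycCount q w : ℝ) / ((m : ℝ) * n)) =
        ((μ (K m) (L n)) w).toReal) :
    Filter.limsup (fun mn : ℕ × ℕ =>
        -(1 / ((K mn.1 : ℝ) * (L mn.2 : ℝ))) *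
          ∑ w : Fin (K mn.1) → Fin (L mn.2) → X,
            pmfExp (μ mn.1 mn.2) (fun q => (cycCount q w : ℝ) / ((mn.1 : ℝ) * mn.2)) *
              Real.logb 2
                (pmfExp (μ mn.1 mn.2) (fun q => (cycCount q w : ℝ) / ((mn.1 : ℝ) * mn.2))))
        (Filter.atTop ×ˢ Filter.atTop) =
    Filter.limsup (fun mn : ℕ × ℕ => pmfEntropy (μ mn.1 mn.2) / ((mn.1 : ℝ) * mn.2))
        (Filter.atTop ×ˢ Filter.atTop) := by
  set f : ℕ × ℕ → ℝ := fun mn => pmfEntropy (μ mn.1 mn.2) / ((mn.1 : ℝ) * mn.2)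
  set φ : ℕ × ℕ → ℕ × ℕ := fun mn => (K mn.1, L mn.2)
  set e : ℕ × ℕ → ℝ := fun mn => (K mn.1 / mn.1 + L mn.2 / mn.2 : ℝ) * logb 2 (Fintype.card X)
  have hpos : ∀ᶠ mn : ℕ × ℕ in atTop ×ˢ atTop,
      (1 ≤ mn.1 ∧ 1 ≤ K mn.1) ∧ (1 ≤ mn.2 ∧ 1 ≤ L mn.2) :=
    ((eventually_ge_atTop 1).and (hK.eventually_ge_atTop 1)).prod_mk
      ((eventually_ge_atTop 1).and (hL.eventually_ge_atTop 1))
  have he : Tendsto e (atTop ×ˢ atTop) (𝓝 0) := by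
    simpa using (((tendsto_natCast_div_of_tendsto_sq_div hKo).comp tendsto_fst).add
      ((tendsto_natCast_div_of_tendsto_sq_div hLo).comp tendsto_snd)).mul_const _
  have hkey : f ≤ᶠ[atTop ×ˢ atTop] f ∘ φ + e := by
    filter_upwards [hpos] with mn ⟨⟨hm, hKm⟩, hn, hLn⟩
    have : NeZero mn.1 := ⟨by omega⟩
    have : NeZero mn.2 := ⟨by omega⟩
    exact pmfEntropy_div_le_of_cycCount hKm hLn _ _ (hmarg mn.1 mn.2 hm hn)
  calc _ = limsup (f ∘ φ) (atTop ×ˢ atTop) := limsup_congr <| by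
        filter_upwards [hpos] with mn ⟨⟨hm, _⟩, hn, _⟩
        simp only [hmarg mn.1 mn.2 hm hn, pmfEntropy, Function.comp, f, φ]
        ring
    _ = limsup f (atTop ×ˢ atTop) :=
        limsup_comp_eq_of_eventually_le_comp_add
          (fun mn => ⟨div_nonneg (pmfEntropy_nonneg _) (by positivity),
            pmfEntropy_div_le_logb_card _⟩) (hK.prodMap hL) he hkey

/-- the normalized expected empirical `(K × L)`-block entropy of the cyclic
counts converges (in `limsup`) to the sup-entropy rate, provided
`E[N(w|X^{[m,n]})/(mn)]` equals the stationary marginal `P_{X^{[K,L]}}(w)`. -/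
theorem limsup_empirical_entropy_eq_sup_entropy_rate
    {X : Type*} [Fintype X] [DecidableEq X] [Nonempty X]
    (μ : ∀ m n : ℕ, PMF (Fin m → Fin n → X)) (K L : ℕ → ℕ)
    (hK : Filter.Tendsto K Filter.atTop Filter.atTop)
    (hL : Filter.Tendsto L Filter.atTop Filter.atTop)
    (hKo : Filter.Tendsto (fun m : ℕ => ((K m : ℝ) ^ 2) / m) Filter.atTop (nhds 0))
    (hLo : Filter.Tendsto (fun n : ℕ => ((L n : ℝ) ^ 2) / n) Filter.atTop (nhds 0))
    (hmarg : ∀ m n : ℕ, 1 ≤ m → 1 ≤ n → ∀ w : Fin (K m) → Fin (L n) → X,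
      pmfExp (μ m n) (fun q => (cycCount q w : ℝ) / ((m : ℝ) * n)) =
        ((μ (K m) (L n)) w).toReal) :
    Filter.limsup (fun mn : ℕ × ℕ =>
        -(1 / ((K mn.1 : ℝ) * (L mn.2 : ℝ))) *
          ∑ w : Fin (K mn.1) → Fin (L mn.2) → X,
            pmfExp (μ mn.1 mn.2) (fun q => (cycCount q w : ℝ) / ((mn.1 : ℝ) * mn.2)) *
              Real.logb 2
                (pmfExp (μ mn.1 mn.2) (fun q => (cycCount q w : ℝ) / ((mn.1 : ℝ) * mn.2))))
        (Filter.atTop ×ˢ Filter.atTop) =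
    Filter.limsup (fun mn : ℕ × ℕ => pmfEntropy (μ mn.1 mn.2) / ((mn.1 : ℝ) * mn.2))
        (Filter.atTop ×ˢ Filter.atTop) :=
  limsup_empirical_entropy_eq_sup_entropy_rate_general μ K L hK hL hKo hLo hmarg
end
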